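/- arXiv:2310.13789 — 2 statements merged into one kernel-verified Lean document; each statement's English description precedes it below -/
import Mathlib

section
/- Let g, v, φ, ℓ be natural numbers with g ≥ 1, ℓ ≤ 3 and ℓ + 2φ = v + 2g + 2, and let l : Fin φ → ℕ be such that every l i is positive and even and ∑ i, l i = 2v. Then there exists an index i with l i = 2. -/
/-- Arithmetic content of the lemma: a graph with `ℓ ≤ 3` and `g ≥ 1`
(with `ℓ + 2φ = v + 2g + 2`) whose `φ` O(D)-loops have positive even lengths
summing to `2v` contains a loop of length 2. -/
theorem exists_length_two_loop_small_grade_positive_genus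
    (g v φ ℓ : ℕ) (hg : 1 ≤ g) (hℓ : ℓ ≤ 3)
    (hrel : ℓ + 2 * φ = v + 2 * g + 2) (l : Fin φ → ℕ)
    (hpos : ∀ i, 0 < l i) (heven : ∀ i, Even (l i))
    (hsum : ∑ i, l i = 2 * v) :
    ∃ i, l i = 2 := by
  by_contra h
  push_neg at h
  have h4 : ∀ i, 4 ≤ l i := by
    intro i
    obtain ⟨k, hk⟩ := heven i
    have := hpos i
    have := h i
    omega
  have hge : 4 * φ ≤ ∑ i, l i := by
    calc 4 * φ = ∑ _i : Fin φ, 4 := by simp [mul_comm]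
    _ ≤ ∑ i, l i := Finset.sum_le_sum fun i _ => h4 i
  omega
end

section
/- Let v, φ, ℓ be natural numbers with ℓ + 2φ = v + 2, and let l : Fin φ → ℕ be such that every l i is even and l i ≥ 4, with ∑ i, l i = 2v. Let m be the number of indices i with l i > 4. Then (∑_{i : l i > 4} l i) + 4 = 2ℓ + 4m, and m + 2 ≤ ℓ. -/
/-- For a planar graph (`ℓ + 2φ = v + 2`) whose `φ` O(D)-loop lengths are even and
at least 4, summing to `2v`, if `m` is the number of loops of length greater than 4,
then the lengths of those loops satisfy `(∑_{l i > 4} l i) + 4 = 2ℓ + 4m`,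
and `m + 2 ≤ ℓ`. -/
theorem long_loops_sum_and_bound
    (v φ ℓ : ℕ) (hrel : ℓ + 2 * φ = v + 2) (l : Fin φ → ℕ)
    (heven : ∀ i, Even (l i)) (hge : ∀ i, 4 ≤ l i)
    (hsum : ∑ i, l i = 2 * v)
    (m : ℕ) (hm : m = (Finset.univ.filter (fun i => 4 < l i)).card) :
    (∑ i ∈ Finset.univ.filter (fun i => 4 < l i), l i) + 4 = 2 * ℓ + 4 * m ∧
      m + 2 ≤ ℓ := by
  classical
  set s := Finset.univ.filter (fun i => 4 < l i) with hs
  have hsplit : (∑ i ∈ s, l i) + (∑ i ∈ Finset.univ.filter (fun i => ¬ 4 < l i), l i)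
      = ∑ i, l i := Finset.sum_filter_add_sum_filter_not _ _ _
  have hcompl : (∑ i ∈ Finset.univ.filter (fun i => ¬ 4 < l i), l i)
      = 4 * (Finset.univ.filter (fun i => ¬ 4 < l i)).card := by
    rw [Finset.sum_congr rfl (fun i hi => ?_), Finset.sum_const, smul_eq_mul, mul_comm]
    simp only [Finset.mem_filter] at hi
    have := hge i
    omega
  have hcard : s.card + (Finset.univ.filter (fun i => ¬ 4 < l i)).card = φ := by
    rw [Finset.card_filter_add_card_filter_not]
    simp
  have hlow : 6 * s.card ≤ ∑ i ∈ s, l i := by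
    calc 6 * s.card = ∑ _i ∈ s, 6 := by rw [Finset.sum_const, smul_eq_mul, mul_comm]
    _ ≤ ∑ i ∈ s, l i := Finset.sum_le_sum (fun i hi => by
        simp only [hs, Finset.mem_filter] at hi
        obtain ⟨k, hk⟩ := heven i
        omega)
  omega
end
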